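/- arXiv:0904.3721 — 2 statements merged into one kernel-verified Lean document; each statement's English description precedes it below -/
import Mathlib

section
/- Let Δ be a reduced irreducible root system with two root lengths and fixed positive system Δ⁺. The subgroup W(Π_s) of the Weyl group generated by short simple reflections equals {w ∈ W : w(Δ⁺_l) ⊂ Δ⁺_l}, i.e. exactly those Weyl group elements mapping every long positive root to a long positive root. -/
noncomputable section
open Finset
open scoped RealInnerProductSpace

attribute [local instance] Classical.propDecidable

/-- The finset of `ι`-tuples of naturals with sum `j`. -/
def tuples (ι : Type) [Fintype ι] (j : ℕ) : Finset (ι → ℕ) :=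
  (Fintype.piFinset fun _ : ι => Finset.range (j + 1)).filter (fun c => ∑ i, c i = j)

/-- The `q`-analogue of the partition function attached to the multiset of weights
`a : ι → M`: the coefficient of `q^j` at `ν` is the number of ways to write `ν` as a sum
of `j` elements of the multiset. -/
def PPart {M : Type} [AddCommGroup M] {ι : Type} [Fintype ι] (a : ι → M) (ν : M) :
    PowerSeries ℤ :=
  PowerSeries.mk fun j => (((tuples ι j).filter (fun c => ∑ i, c i • a i = ν)).card : ℤ)

variable (V : Type) [NormedAddCommGroup V] [InnerProductSpace ℝ V]

/-- Data of a (crystallographic, reduced) root system inside a real inner product space,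
together with a linear functional `pol` (nonvanishing on roots) singling out the
positive roots. -/
structure RootSystemData where
  Δ : Finset V
  pol : V →ₗ[ℝ] ℝ
  nonzero : (0 : V) ∉ Δ
  neg_mem : ∀ α ∈ Δ, -α ∈ Δ
  reduced : ∀ α ∈ Δ, ∀ t : ℝ, t • α ∈ Δ → t = 1 ∨ t = -1
  crys : ∀ α ∈ Δ, ∀ β ∈ Δ, ∃ n : ℤ, 2 * ⟪α, β⟫ / ⟪α, α⟫ = (n : ℝ)
  reflect_mem : ∀ α ∈ Δ, ∀ β ∈ Δ, β - (2 * ⟪α, β⟫ / ⟪α, α⟫) • α ∈ Δ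
  pol_ne : ∀ α ∈ Δ, pol α ≠ 0

variable {V}

namespace RootSystemData

variable (R : RootSystemData V)

/-- The positive roots. -/
def pos : Finset V := R.Δ.filter (fun α => 0 < R.pol α)

/-- The short roots (roots of minimal length). -/
def short : Finset V := R.Δ.filter (fun α => ∀ β ∈ R.Δ, ‖α‖ ≤ ‖β‖)

/-- The long roots. -/
def long : Finset V := R.Δ.filter (fun α => ∃ β ∈ R.Δ, ‖β‖ < ‖α‖)

/-- Short positive roots `Δ⁺_s`. -/
def posS : Finset V := R.pos ∩ R.short

/-- Long positive roots `Δ⁺_l`. -/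
def posL : Finset V := R.pos ∩ R.long

/-- The simple roots: indecomposable positive roots. -/
def simples : Finset V := R.pos.filter (fun α => ¬ ∃ β ∈ R.pos, ∃ γ ∈ R.pos, β + γ = α)

/-- Short simple roots `Π_s`. -/
def simplesS : Finset V := R.simples ∩ R.short

/-- Long simple roots `Π_l`. -/
def simplesL : Finset V := R.simples ∩ R.long

/-- `ρ`, the half-sum of positive roots. -/
def rho : V := (2 : ℝ)⁻¹ • ∑ α ∈ R.pos, α

/-- `ρ_s`, the half-sum of short positive roots. -/
def rhoS : V := (2 : ℝ)⁻¹ • ∑ α ∈ R.posS, α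

/-- `ρ_l`, the half-sum of long positive roots. -/
def rhoL : V := (2 : ℝ)⁻¹ • ∑ α ∈ R.posL, α

/-- `g` is the orthogonal reflection in (the hyperplane orthogonal to) some `α ∈ S`. -/
def IsReflectionIn (S : Finset V) (g : V ≃ₗ[ℝ] V) : Prop :=
  ∃ α ∈ S, ∀ x : V, g x = x - (2 * ⟪α, x⟫ / ⟪α, α⟫) • α

/-- The Weyl group `W`, generated by all root reflections. -/
def weyl : Subgroup (V ≃ₗ[ℝ] V) := Subgroup.closure {g | IsReflectionIn R.Δ g}

/-- `W_l`, the subgroup generated by reflections in long roots. -/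
def weylL : Subgroup (V ≃ₗ[ℝ] V) := Subgroup.closure {g | IsReflectionIn R.long g}

/-- `W(Π_s)`, the subgroup generated by reflections in short simple roots. -/
def weylS : Subgroup (V ≃ₗ[ℝ] V) := Subgroup.closure {g | IsReflectionIn R.simplesS g}

/-- The length `ℓ(w)` of an element, as the number of inversions:
positive roots sent to negative roots. -/
def len (w : V ≃ₗ[ℝ] V) : ℕ := (R.pos.filter (fun α => -(w α) ∈ R.pos)).card

/-- Dominant weights. -/
def Dominant (μ : V) : Prop := ∀ α ∈ R.pos, 0 ≤ ⟪μ, α⟫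

/-- `H`-dominant weights: dominant with respect to the long positive roots. -/
def DominantL (μ : V) : Prop := ∀ α ∈ R.posL, 0 ≤ ⟪μ, α⟫

/-- The root system is irreducible. -/
def IsIrreducible : Prop :=
  ¬ ∃ S T : Finset V, S.Nonempty ∧ T.Nonempty ∧ S ∪ T = R.Δ ∧
    ∀ α ∈ S, ∀ β ∈ T, ⟪α, β⟫ = 0

/-- The root system has two root lengths. -/
def TwoLengths : Prop := ∃ α ∈ R.Δ, ∃ β ∈ R.Δ, ‖α‖ ≠ ‖β‖

/-- The roots span `V`. -/
def Spans : Prop := Submodule.span ℝ (R.Δ : Set V) = ⊤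

/-- `μ ≼ ν` in the root order: `ν - μ` is a non-negative integer combination of
positive roots. -/
def rootLE (μ ν : V) : Prop := ∃ c : R.pos → ℕ, ν - μ = ∑ α : R.pos, c α • (α : V)

/-- The generalised Kostka–Foulkes polynomial `m^μ_{λ,Ψ}(q)` attached to the multiset of
weights `a : ι → V`. -/
def genKF {ι : Type} [Fintype ι] (a : ι → V) [Fintype R.weyl] (lam mu : V) :
    PowerSeries ℤ :=
  ∑ w : R.weyl, ((-1 : ℤ) ^ R.len (w : V ≃ₗ[ℝ] V)) •
    PPart a ((w : V ≃ₗ[ℝ] V) (lam + R.rho) - (mu + R.rho))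

/-- The short `q`-analogue `m̄^μ_λ(q)`. -/
def mbar [Fintype R.weyl] (lam mu : V) : PowerSeries ℤ :=
  R.genKF (fun α : R.posS => (α : V)) lam mu

/-- Lusztig's `q`-analogue `m^μ_λ(q)`. -/
def mfull [Fintype R.weyl] (lam mu : V) : PowerSeries ℤ :=
  R.genKF (fun α : R.pos => (α : V)) lam mu

/-- The weight multiplicity `m_λ^μ` of `μ` in the simple module `V_λ`, via Kostant's
multiplicity formula (`q = 1` value of Lusztig's `q`-analogue), for the partition
function attached to an arbitrary multiset of weights `a : ι → V`. -/
def mult1 [Fintype R.weyl] {ι : Type} [Fintype ι] (a : ι → V) (lam mu : V) : ℤ :=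
  ∑ w : R.weyl, ((-1 : ℤ) ^ R.len (w : V ≃ₗ[ℝ] V)) *
    (Nat.card {c : ι → ℕ // ∑ i, c i • a i = (w : V ≃ₗ[ℝ] V) (lam + R.rho) - (mu + R.rho)} : ℤ)

/-- `e^μ`, a basis element of the group algebra of the weight lattice. -/
def expo {k : Type} [CommRing k] (μ : V) : AddMonoidAlgebra k V := AddMonoidAlgebra.single μ 1

/-- The skew-symmetrisation operator `J = Σ_{w ∈ W} (-1)^{ℓ(w)} w`. -/
def Jop {k : Type} [CommRing k] [Fintype R.weyl] (a : AddMonoidAlgebra k V) :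
    AddMonoidAlgebra k V :=
  ∑ w : R.weyl, ((-1 : ℤ) ^ R.len (w : V ≃ₗ[ℝ] V)) •
    AddMonoidAlgebra.mapDomain (⇑(w : V ≃ₗ[ℝ] V)) a

end RootSystemData

/-!
A simple reflection `s_α` permutes the positive roots other than `α`, hence preserves `Δ⁺_l`
when `α` is short; so `W(Π_s)` maps `Δ⁺_l` to itself. Conversely write `w ∈ W` as a word in
simple reflections and look at its last letter `s_α`. If `α` is short, `w s_α` still preserves
`Δ⁺_l` and is a shorter word. If `α` is long, then `w α ∈ Δ⁺_l` means that the word without its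
last letter sends `α` to a negative root, and the exchange property deletes a letter, so `w`
itself has a shorter expression. Induction on the word length concludes.
-/

namespace RootSystemData

section Reflection

def sref (α : V) : V ≃ₗ[ℝ] V := (ℝ ∙ α)ᗮ.reflection.toLinearEquiv

lemma sref_apply (α x : V) : sref α x = x - (2 * ⟪α, x⟫ / ⟪α, α⟫) • α := by
  rw [sref, LinearIsometryEquiv.coe_toLinearEquiv, Submodule.reflection_orthogonal_apply,
    Submodule.reflection_singleton_apply, real_inner_self_eq_norm_sq]
  simp only [RCLike.ofReal_real_eq_id, id]
  module

@[simp]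
lemma sref_sref (α x : V) : sref α (sref α x) = x :=
  (ℝ ∙ α)ᗮ.reflection_reflection x

lemma sref_mul_self (α : V) : sref α * sref α = 1 :=
  LinearEquiv.ext (sref_sref α)

lemma sref_inv (α : V) : (sref α)⁻¹ = sref α :=
  inv_eq_of_mul_eq_one_right (sref_mul_self α)

@[simp]
lemma sref_self (α : V) : sref α α = -α :=
  Submodule.reflection_orthogonalComplement_singleton_eq_neg α

lemma inner_sref_sref (α x y : V) : ⟪sref α x, sref α y⟫ = ⟪x, y⟫ :=
  (ℝ ∙ α)ᗮ.reflection.inner_map_map x y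

lemma norm_sref (α x : V) : ‖sref α x‖ = ‖x‖ :=
  (ℝ ∙ α)ᗮ.reflection.norm_map x

lemma inner_sref_right_self (α x : V) : ⟪α, sref α x⟫ = -⟪α, x⟫ := by
  rw [← inner_sref_sref α α (sref α x), sref_self, sref_sref, inner_neg_left]

lemma sref_neg (α : V) : sref (-α) = sref α := by
  ext x
  rw [sref_apply, sref_apply, inner_neg_left, inner_neg_neg, mul_neg, neg_div, neg_smul_neg]

lemma sref_conj (u : V ≃ₗ[ℝ] V) (hu : ∀ x y : V, ⟪u x, u y⟫ = ⟪x, y⟫) (β : V) :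
    sref (u β) = u * sref β * u⁻¹ := by
  ext y
  change sref (u β) y = u (sref β (u.symm y))
  have h : ⟪β, u.symm y⟫ = ⟪u β, y⟫ := by rw [← hu, u.apply_symm_apply]
  rw [sref_apply, sref_apply, map_sub, map_smul, u.apply_symm_apply, h, hu β β]

lemma sref_mem_closure {S : Finset V} {α : V} (hα : α ∈ S) :
    sref α ∈ Subgroup.closure {g | IsReflectionIn S g} :=
  Subgroup.subset_closure ⟨α, hα, sref_apply α⟩

def sprod (l : List V) : V ≃ₗ[ℝ] V := (l.map sref).prod

@[simp]
lemma sprod_nil : sprod ([] : List V) = 1 := rfl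

@[simp]
lemma sprod_cons (α : V) (l : List V) : sprod (α :: l) = sref α * sprod l := by
  simp [sprod]

lemma sprod_append (l₁ l₂ : List V) : sprod (l₁ ++ l₂) = sprod l₁ * sprod l₂ := by
  simp [sprod]

@[simp]
lemma sprod_concat (l : List V) (α : V) : sprod (l.concat α) = sprod l * sref α := by
  simp [sprod_append]

lemma sprod_reverse (l : List V) : sprod l.reverse = (sprod l)⁻¹ := by
  induction l with
  | nil => simp
  | cons α l ih => simp [sprod_append, ih, sref_inv]

lemma inner_sprod_sprod (l : List V) (x y : V) : ⟪sprod l x, sprod l y⟫ = ⟪x, y⟫ := by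
  induction l with
  | nil => rfl
  | cons α l ih => simp [inner_sref_sref, ih]

lemma exists_sprod_eq_of_mem_closure {S : Finset V} {w : V ≃ₗ[ℝ] V}
    (hw : w ∈ Subgroup.closure {g | IsReflectionIn S g}) :
    ∃ l : List V, (∀ α ∈ l, α ∈ S) ∧ sprod l = w := by
  induction hw using Subgroup.closure_induction with
  | mem g hg =>
    obtain ⟨α, hα, hg⟩ := hg
    exact ⟨[α], by simpa using hα, LinearEquiv.ext fun x => by simp [hg, sref_apply]⟩
  | one => exact ⟨[], by simp, rfl⟩
  | mul a b _ _ iha ihb =>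
    obtain ⟨la, hla, rfl⟩ := iha
    obtain ⟨lb, hlb, rfl⟩ := ihb
    refine ⟨la ++ lb, fun α hα => ?_, sprod_append la lb⟩
    rcases List.mem_append.1 hα with h | h
    exacts [hla α h, hlb α h]
  | inv a _ iha =>
    obtain ⟨l, hl, rfl⟩ := iha
    exact ⟨l.reverse, fun α hα => hl α (List.mem_reverse.1 hα), sprod_reverse l⟩

end Reflection

variable (R : RootSystemData V)

section Roots

lemma pos_subset : R.pos ⊆ R.Δ := filter_subset _ _

lemma pol_pos {β : V} (h : β ∈ R.pos) : 0 < R.pol β := (mem_filter.1 h).2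

lemma inner_self_pos_of_mem {β : V} (h : β ∈ R.Δ) : 0 < ⟪β, β⟫ :=
  real_inner_self_pos.2 fun h0 => R.nonzero (h0 ▸ h)

lemma mem_pos_or_neg_mem_pos {β : V} (h : β ∈ R.Δ) : β ∈ R.pos ∨ -β ∈ R.pos := by
  rcases (R.pol_ne β h).lt_or_gt with hlt | hgt
  · exact Or.inr (mem_filter.2 ⟨R.neg_mem β h, by simpa using hlt⟩)
  · exact Or.inl (mem_filter.2 ⟨h, hgt⟩)

lemma neg_notMem_pos {β : V} (h : β ∈ R.pos) : -β ∉ R.pos := fun h' => by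
  have := R.pol_pos h'
  rw [map_neg] at this
  linarith [R.pol_pos h]

lemma sref_mem {α β : V} (hα : α ∈ R.Δ) (hβ : β ∈ R.Δ) : sref α β ∈ R.Δ := by
  rw [sref_apply]
  exact R.reflect_mem α hα β hβ

lemma sprod_mem {l : List V} (hl : ∀ α ∈ l, α ∈ R.Δ) {β : V} (hβ : β ∈ R.Δ) :
    sprod l β ∈ R.Δ := by
  induction l with
  | nil => exact hβ
  | cons α l ih =>
    simp only [List.mem_cons, forall_eq_or_imp] at hl
    exact R.sref_mem hl.1 (ih hl.2)

lemma pol_sref (α β : V) : R.pol (sref α β) = R.pol β - 2 * ⟪α, β⟫ / ⟪α, α⟫ * R.pol α := by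
  rw [sref_apply, map_sub, map_smul, smul_eq_mul]

lemma inner_lt_norm_mul_norm_of_ne {α β : V} (hα : α ∈ R.Δ) (hβ : β ∈ R.Δ) (hne : β ≠ α) :
    ⟪α, β⟫ < ‖α‖ * ‖β‖ := by
  refine inner_lt_norm_mul_iff_real.2 fun h => hne ?_
  have hα0 : ‖α‖ ≠ 0 := norm_ne_zero_iff.2 fun h0 => R.nonzero (h0 ▸ hα)
  have hβα : β = (‖β‖ / ‖α‖) • α := by
    rw [div_eq_inv_mul, mul_smul, h, inv_smul_smul₀ hα0]
  rcases R.reduced α hα _ (hβα ▸ hβ) with h1 | h1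
  · rwa [h1, one_smul] at hβα
  · have : 0 ≤ ‖β‖ / ‖α‖ := by positivity
    linarith

/-- The two Cartan integers are positive, with product `4 cos² θ < 4`. -/
lemma cartan_eq_one_of_inner_pos {α β : V} (hα : α ∈ R.Δ) (hβ : β ∈ R.Δ) (hip : 0 < ⟪α, β⟫)
    (hne : β ≠ α) : 2 * ⟪α, β⟫ / ⟪α, α⟫ = 1 ∨ 2 * ⟪β, α⟫ / ⟪β, β⟫ = 1 := by
  obtain ⟨n, hn⟩ := R.crys α hα β hβ
  obtain ⟨m, hm⟩ := R.crys β hβ α hα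
  have hA := R.inner_self_pos_of_mem hα
  have hB := R.inner_self_pos_of_mem hβ
  have hip' : 0 < ⟪β, α⟫ := by rwa [real_inner_comm]
  have hn0 : (0 : ℝ) < n := hn ▸ by positivity
  have hm0 : (0 : ℝ) < m := hm ▸ by positivity
  have hnm : (n : ℝ) * m < 4 := by
    rw [← hn, ← hm, real_inner_comm α β, div_mul_div_comm, div_lt_iff₀ (by positivity),
      real_inner_self_eq_norm_mul_norm α, real_inner_self_eq_norm_mul_norm β]
    nlinarith [R.inner_lt_norm_mul_norm_of_ne hα hβ hne]
  have hnm' : n * m < 4 := by exact_mod_cast hnm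
  have : 0 < n := by exact_mod_cast hn0
  have : 0 < m := by exact_mod_cast hm0
  have : n = 1 ∨ m = 1 := by
    by_contra! h
    nlinarith [show 2 ≤ n by omega, show 2 ≤ m by omega]
  rcases this with rfl | rfl
  exacts [Or.inl (hn.trans Int.cast_one), Or.inr (hm.trans Int.cast_one)]

lemma sub_mem_of_inner_pos {α β : V} (hα : α ∈ R.Δ) (hβ : β ∈ R.Δ) (hip : 0 < ⟪α, β⟫)
    (hne : β ≠ α) : β - α ∈ R.Δ := by
  rcases R.cartan_eq_one_of_inner_pos hα hβ hip hne with h | h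
  · have := R.reflect_mem α hα β hβ
    rwa [h, one_smul] at this
  · have := R.neg_mem _ (R.reflect_mem β hβ α hα)
    rwa [h, one_smul, neg_sub] at this

end Roots

section Simple

lemma simples_subset_pos : R.simples ⊆ R.pos := filter_subset _ _

lemma sub_mem_pos_of_mem_simples {α δ : V} (hα : α ∈ R.simples) (hδ : δ ∈ R.pos) (hne : δ ≠ α)
    (hip : 0 < ⟪α, δ⟫) : δ - α ∈ R.pos := by
  have hαp := R.simples_subset_pos hα
  refine (R.mem_pos_or_neg_mem_pos
    (R.sub_mem_of_inner_pos (R.pos_subset hαp) (R.pos_subset hδ) hip hne)).resolve_right ?_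
  intro h
  rw [neg_sub] at h
  exact (mem_filter.1 hα).2 ⟨δ, hδ, α - δ, h, add_sub_cancel δ α⟩

lemma pol_induction {P : V → Prop}
    (h : ∀ β ∈ R.pos, (∀ γ ∈ R.pos, R.pol γ < R.pol β → P γ) → P β) :
    ∀ β ∈ R.pos, P β := by
  by_contra! hbad
  obtain ⟨β, hβ, hmin⟩ := exists_min_image (R.pos.filter (¬ P ·)) R.pol
    (by obtain ⟨β, hβ, hP⟩ := hbad; exact ⟨β, mem_filter.2 ⟨hβ, hP⟩⟩)
  obtain ⟨hβ, hPβ⟩ := mem_filter.1 hβ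
  exact hPβ (h β hβ fun γ hγ hlt => by_contra fun hPγ =>
    (hmin γ (mem_filter.2 ⟨hγ, hPγ⟩)).not_gt hlt)

lemma exists_add_eq_of_notMem_simples {β : V} (hβ : β ∈ R.pos) (hs : β ∉ R.simples) :
    ∃ γ ∈ R.pos, ∃ δ ∈ R.pos, γ + δ = β := by
  by_contra h
  exact hs (mem_filter.2 ⟨hβ, h⟩)

lemma sref_mem_pos {α : V} (hα : α ∈ R.simples) :
    ∀ β ∈ R.pos, β ≠ α → sref α β ∈ R.pos := by
  have hαp := R.simples_subset_pos hα
  have hA := R.inner_self_pos_of_mem (R.pos_subset hαp)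
  refine R.pol_induction fun β hβ ih hne => ?_
  have hmem := R.sref_mem (R.pos_subset hαp) (R.pos_subset hβ)
  by_cases hip : ⟪α, β⟫ ≤ 0
  · refine mem_filter.2 ⟨hmem, ?_⟩
    have : 2 * ⟪α, β⟫ / ⟪α, α⟫ ≤ 0 := div_nonpos_of_nonpos_of_nonneg (by linarith) hA.le
    rw [pol_sref]
    nlinarith [R.pol_pos hβ, R.pol_pos hαp]
  rw [not_le] at hip
  -- `s_α (β - α) = s_α β + α` is positive by induction; if `-s_α β` were positive too,
  -- stripping `α` from it would give the positive root `-(s_α β + α)`.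
  have hβα := R.sub_mem_pos_of_mem_simples hα hβ hne hip
  have hβα_ne : β - α ≠ α := fun h => by
    have h2α : (2 : ℝ) • α ∈ R.Δ := by
      rw [two_smul, ← eq_add_of_sub_eq h]
      exact R.pos_subset hβ
    rcases R.reduced α (R.pos_subset hαp) 2 h2α with h2 | h2 <;> norm_num at h2
  have hplus : sref α β + α ∈ R.pos := by
    simpa [map_sub] using ih (β - α) hβα (by rw [map_sub]; linarith [R.pol_pos hαp]) hβα_ne
  refine (R.mem_pos_or_neg_mem_pos hmem).resolve_right fun hneg => ?_
  have hγ_ne : -sref α β ≠ α := fun h =>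
    hne (by simpa using congrArg (sref α) (neg_eq_iff_eq_neg.1 h))
  have hγ_ip : 0 < ⟪α, -sref α β⟫ := by rwa [inner_neg_right, inner_sref_right_self, neg_neg]
  have := R.sub_mem_pos_of_mem_simples hα hneg hγ_ne hγ_ip
  rw [show -sref α β - α = -(sref α β + α) by abel] at this
  exact R.neg_notMem_pos hplus this

lemma mem_closure_simples : ∀ β ∈ R.pos, β ∈ AddSubmonoid.closure (R.simples : Set V) := by
  refine R.pol_induction fun β hβ ih => ?_
  by_cases hs : β ∈ R.simples
  · exact AddSubmonoid.subset_closure hs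
  obtain ⟨γ, hγ, δ, hδ, rfl⟩ := R.exists_add_eq_of_notMem_simples hβ hs
  have hpol : R.pol (γ + δ) = R.pol γ + R.pol δ := map_add _ _ _
  exact add_mem (ih γ hγ (by linarith [R.pol_pos hδ])) (ih δ hδ (by linarith [R.pol_pos hγ]))

lemma exists_mem_simples_inner_pos {β : V} (hβ : β ∈ R.pos) :
    ∃ α ∈ R.simples, 0 < ⟪α, β⟫ := by
  by_contra! h
  have hle : ∀ x ∈ AddSubmonoid.closure (R.simples : Set V), ⟪x, β⟫ ≤ 0 := by
    intro x hx
    induction hx using AddSubmonoid.closure_induction with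
    | mem x hx => exact h x hx
    | zero => simp
    | add x y _ _ hx hy => rw [inner_add_left]; linarith
  exact (hle β (R.mem_closure_simples β hβ)).not_gt (R.inner_self_pos_of_mem (R.pos_subset hβ))

lemma sref_mem_closure_simples :
    ∀ β ∈ R.pos, sref β ∈ Subgroup.closure {g | IsReflectionIn R.simples g} := by
  refine R.pol_induction fun β hβ ih => ?_
  by_cases hs : β ∈ R.simples
  · exact sref_mem_closure hs
  obtain ⟨α, hα, hip⟩ := R.exists_mem_simples_inner_pos hβ
  have hαp := R.simples_subset_pos hα
  have hlt : R.pol (sref α β) < R.pol β := by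
    have := R.inner_self_pos_of_mem (R.pos_subset hαp)
    have : 0 < 2 * ⟪α, β⟫ / ⟪α, α⟫ := by positivity
    rw [pol_sref]
    nlinarith [R.pol_pos hαp]
  have ih' := ih _ (R.sref_mem_pos hα β hβ fun h => hs (h ▸ hα)) hlt
  rw [sref_conj _ (inner_sref_sref α) β, sref_inv] at ih'
  have hβ_conj : sref β = sref α * (sref α * sref β * sref α) * sref α := by
    simp only [← mul_assoc, sref_mul_self, one_mul]
    rw [mul_assoc, sref_mul_self, mul_one]
  rw [hβ_conj]
  exact mul_mem (mul_mem (sref_mem_closure hα) ih') (sref_mem_closure hα)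

lemma weyl_le_closure_simples :
    R.weyl ≤ Subgroup.closure {g | IsReflectionIn R.simples g} := by
  refine (Subgroup.closure_le _).2 ?_
  rintro g ⟨α, hα, hg⟩
  obtain rfl : g = sref α := LinearEquiv.ext fun x => by rw [hg x, sref_apply]
  rcases R.mem_pos_or_neg_mem_pos hα with h | h
  · exact R.sref_mem_closure_simples α h
  · rw [← sref_neg]
    exact R.sref_mem_closure_simples _ h

lemma exists_sprod_eq_sprod_mul_sref :
    ∀ l : List V, (∀ α ∈ l, α ∈ R.simples) → ∀ β ∈ R.pos, -sprod l β ∈ R.pos →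
      ∃ l' : List V, (∀ α ∈ l', α ∈ R.simples) ∧ l'.length + 1 = l.length ∧
        sprod l' = sprod l * sref β := by
  intro l
  induction l with
  | nil => exact fun _ β hβ hneg => absurd hneg (R.neg_notMem_pos hβ)
  | cons α t ih =>
    intro hl β hβ hneg
    simp only [List.mem_cons, forall_eq_or_imp] at hl
    obtain ⟨hα, ht⟩ := hl
    rw [sprod_cons, LinearEquiv.mul_apply] at hneg
    have htβ := R.sprod_mem (fun γ hγ => R.pos_subset (R.simples_subset_pos (ht γ hγ)))
      (R.pos_subset hβ)
    rcases R.mem_pos_or_neg_mem_pos htβ with hpos | hc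
    · have htβα : sprod t β = α := by
        by_contra hne
        exact R.neg_notMem_pos (R.sref_mem_pos hα _ hpos hne) hneg
      refine ⟨t, ht, rfl, ?_⟩
      rw [sprod_cons, ← htβα, sref_conj _ (inner_sprod_sprod t) β, mul_assoc, mul_assoc,
        inv_mul_cancel_left, mul_assoc, sref_mul_self, mul_one]
    · obtain ⟨t', ht', hlen, heq⟩ := ih ht β hβ hc
      refine ⟨α :: t', ?_, by simp [← hlen], by rw [sprod_cons, heq, sprod_cons, mul_assoc]⟩
      simpa using ⟨hα, ht'⟩

end Simple

section Long

lemma posL_subset_pos : R.posL ⊆ R.pos := inter_subset_left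

lemma mem_short_or_mem_long {α : V} (hα : α ∈ R.Δ) : α ∈ R.short ∨ α ∈ R.long := by
  by_cases h : ∀ β ∈ R.Δ, ‖α‖ ≤ ‖β‖
  · exact Or.inl (mem_filter.2 ⟨hα, h⟩)
  · push Not at h
    exact Or.inr (mem_filter.2 ⟨hα, h⟩)

lemma sref_mem_posL {α β : V} (hα : α ∈ R.simplesS) (hβ : β ∈ R.posL) : sref α β ∈ R.posL := by
  obtain ⟨hαs, hαshort⟩ := mem_inter.1 hα
  obtain ⟨hβp, hβl⟩ := mem_inter.1 hβ
  obtain ⟨-, γ, hγ, hγβ⟩ := mem_filter.1 hβl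
  have hne : β ≠ α := by
    rintro rfl
    exact (mem_filter.1 hαshort).2 γ hγ |>.not_gt hγβ
  have hpos := R.sref_mem_pos hαs β hβp hne
  exact mem_inter.2 ⟨hpos, mem_filter.2 ⟨R.pos_subset hpos, γ, hγ, by rwa [norm_sref]⟩⟩

lemma sprod_mem_posL {l : List V} (hl : ∀ α ∈ l, α ∈ R.simplesS) {β : V} (hβ : β ∈ R.posL) :
    sprod l β ∈ R.posL := by
  induction l with
  | nil => exact hβ
  | cons α l ih =>
    simp only [List.mem_cons, forall_eq_or_imp] at hl
    exact R.sref_mem_posL hl.1 (ih hl.2)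

lemma sprod_mem_weylS (l : List V) (hl : ∀ α ∈ l, α ∈ R.simples)
    (hL : ∀ β ∈ R.posL, sprod l β ∈ R.posL) : sprod l ∈ R.weylS := by
  rcases l.eq_nil_or_concat with rfl | ⟨t, α, hl_eq⟩
  · exact one_mem _
  subst hl_eq
  simp only [List.concat_eq_append, List.mem_append, List.mem_singleton] at hl
  have ht : ∀ γ ∈ t, γ ∈ R.simples := fun γ hγ => hl γ (Or.inl hγ)
  have hα : α ∈ R.simples := hl α (Or.inr rfl)
  rw [sprod_concat] at hL ⊢
  rcases R.mem_short_or_mem_long (R.pos_subset (R.simples_subset_pos hα)) with hs | hlong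
  · have hαS : α ∈ R.simplesS := mem_inter.2 ⟨hα, hs⟩
    have htL : ∀ β ∈ R.posL, sprod t β ∈ R.posL := fun β hβ => by
      simpa using hL _ (R.sref_mem_posL hαS hβ)
    exact mul_mem (sprod_mem_weylS t ht htL) (sref_mem_closure hαS)
  · have hαL : α ∈ R.posL := mem_inter.2 ⟨R.simples_subset_pos hα, hlong⟩
    obtain ⟨t', ht', hlen, heq⟩ := R.exists_sprod_eq_sprod_mul_sref t ht α
      (R.simples_subset_pos hα) (by simpa using R.posL_subset_pos (hL α hαL))
    rw [← heq] at hL ⊢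
    exact sprod_mem_weylS t' ht' hL
termination_by l.length
decreasing_by all_goals simp only [hl_eq, List.length_concat]; omega

end Long

end RootSystemData

theorem statement4_general {V : Type} [NormedAddCommGroup V] [InnerProductSpace ℝ V]
    (R : RootSystemData V) :
    ∀ w : V ≃ₗ[ℝ] V, w ∈ R.weyl →
      (w ∈ R.weylS ↔ ∀ α ∈ R.posL, w α ∈ R.posL) := by
  intro w hw
  constructor
  · intro hS
    obtain ⟨l, hl, rfl⟩ := RootSystemData.exists_sprod_eq_of_mem_closure hS
    exact fun β hβ => R.sprod_mem_posL hl hβ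
  · intro hL
    obtain ⟨l, hl, rfl⟩ :=
      RootSystemData.exists_sprod_eq_of_mem_closure (R.weyl_le_closure_simples hw)
    exact R.sprod_mem_weylS l hl hL

/-- For an irreducible root system with two root lengths, the subgroup
`W(Π_s)` generated by the short simple reflections consists exactly of those elements of
the Weyl group mapping every long positive root to a long positive root. -/
theorem statement4 {V : Type} [NormedAddCommGroup V] [InnerProductSpace ℝ V]
    [FiniteDimensional ℝ V] (R : RootSystemData V)
    (hirr : R.IsIrreducible) (h2 : R.TwoLengths) (hsp : R.Spans) :
    ∀ w : V ≃ₗ[ℝ] V, w ∈ R.weyl →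
      (w ∈ R.weylS ↔ ∀ α ∈ R.posL, w α ∈ R.posL) :=
  statement4_general R
end
end

section
/- In the formal character ring, the short q-analogues of λ satisfy the generating identity Σ_{μ∈X} m̄^μ_λ(q) e^μ = χ_λ · ∏_{α>0}(1 − e^{−α}) / ∏_{α∈Δ⁺_s}(1 − q e^{−α}). Consequently m̄^μ_λ(q) = Σ_{A⊂Δ⁺_l} (−q)^{#A} m^{μ+|A|}_λ(q), relating short q-analogues to Lusztig's q-analogues m^ν_λ(q), and at q = 1, μ = 0: dim V_λ^H = Σ_{A⊂Δ⁺_l} (−1)^{#A} m^{|A|}_λ, where m^ν_λ is the weight multiplicity of ν in V_λ and |A| is the sum of the elements of A. -/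
/-! Expanding every factor `(1 - q e^{-α})⁻¹` as a geometric series shows that
`∑_ν P_q^Ψ(ν) e^{-ν} = ∏_{α ∈ Ψ} (1 - q e^{-α})⁻¹` for any finite family `Ψ` of weights. Hence the
generating series of the short partition function is that of the full one times
`∏_{α ∈ Δ⁺_l} (1 - q e^{-α})`; expanding this product over subsets `A ⊆ Δ⁺_l` and reading off the
coefficient of `e^{-ν}` gives `P̄_q(ν) = ∑_A (-q)^{#A} P_q(ν - |A|)`, and alternating over `W` gives
the relation between `m̄` and `m`. At `q = 1` a partition function is the sum of its
`q`-coefficients, a finite sum because the functional `pol`, positive on the roots, bounds the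
number of parts of every decomposition of a fixed weight. -/

noncomputable section
open Finset
open scoped RealInnerProductSpace

attribute [local instance] Classical.propDecidable

variable (V : Type) [NormedAddCommGroup V] [InnerProductSpace ℝ V]

variable {V}

/-- `Σ_{μ∈X} m̄^μ_λ(q) e^μ`, expanded coefficientwise in `q`. -/
def Fser {V : Type} [NormedAddCommGroup V] [InnerProductSpace ℝ V]
    (R : RootSystemData V) [Fintype R.weyl] (lam : V) :
    PowerSeries (AddMonoidAlgebra ℤ V) :=
  PowerSeries.mk fun j =>
    ∑ w : R.weyl, ∑ c ∈ tuples R.posS j,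
      ((-1 : ℤ) ^ R.len (w : V ≃ₗ[ℝ] V)) •
        RootSystemData.expo ((w : V ≃ₗ[ℝ] V) (lam + R.rho) - R.rho -
          ∑ i : R.posS, c i • (i : V))


open PowerSeries AddMonoidAlgebra Filter

lemma mk_pow_mul_one_sub_X_mul_C {S : Type} [CommRing S] (r : S) :
    (mk fun n => r ^ n) * (1 - X * C r) = 1 := by
  simpa [rescale_mk, rescale_X, mul_comm] using
    congrArg (rescale r) (mk_one_mul_one_sub_eq_one (S := S))

lemma sum_range_coeff_X_pow_mul {S : Type} [Semiring S] (F : PowerSeries S) (k N : ℕ) :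
    ∑ j ∈ range N, coeff j (X ^ k * F) = ∑ j ∈ range (N - k), coeff j F := by
  induction N with
  | zero => simp
  | succ N ih =>
    rw [sum_range_succ, ih, coeff_X_pow_mul']
    split_ifs with h
    · rw [Nat.sub_add_comm h, sum_range_succ]
    · rw [add_zero, Nat.sub_eq_zero_of_le (Nat.le_of_not_le h),
        Nat.sub_eq_zero_of_le (by omega)]

section PartitionFunction

variable {M : Type} [AddCommGroup M] {ι : Type} [Fintype ι]

lemma mem_tuples {j : ℕ} {c : ι → ℕ} : c ∈ tuples ι j ↔ ∑ i, c i = j := by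
  simp only [tuples, mem_filter, Fintype.mem_piFinset, mem_range, and_iff_right_iff_imp]
  rintro rfl i
  exact Nat.lt_succ_of_le (single_le_sum (fun _ _ => Nat.zero_le _) (mem_univ i))

/-- `∑_ν P_q(ν) e^{-ν}`, graded by the power of `q`. -/
def partitionSeries (a : ι → M) : PowerSeries (AddMonoidAlgebra ℤ M) :=
  mk fun j => ∑ c ∈ tuples ι j, single (-∑ i, c i • a i) 1

lemma partitionSeries_eq_prod (a : ι → M) :
    partitionSeries a = ∏ i, mk fun n => single (-a i) (1 : ℤ) ^ n := by
  ext j : 1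
  rw [coeff_prod, partitionSeries, coeff_mk]
  refine sum_nbij' Finsupp.equivFunOnFinite.symm (⇑) (fun c hc => ?_) (fun l hl => ?_)
    (fun c _ => rfl) (fun l _ => Finsupp.equivFunOnFinite.symm_apply_apply l) (fun c _ => ?_)
  · simpa [mem_finsuppAntidiag, mem_tuples] using hc
  · simpa [mem_finsuppAntidiag, mem_tuples] using hl
  · simp only [coeff_mk, single_pow, one_pow, prod_single, prod_const_one, ← sum_neg_distrib,
      ← smul_neg]
    rfl

lemma partitionSeries_mul_prod (a : ι → M) :
    partitionSeries a * ∏ i, (1 - X * C (single (-a i) (1 : ℤ))) = 1 := by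
  rw [partitionSeries_eq_prod, ← prod_mul_distrib]
  exact prod_eq_one fun i _ => mk_pow_mul_one_sub_X_mul_C _

def seriesCoeffAt (p : M) : PowerSeries (AddMonoidAlgebra ℤ M) →+ PowerSeries ℤ where
  toFun F := mk fun j => (coeff j F).coeff p
  map_zero' := by ext; simp
  map_add' F G := by ext; simp

@[simp]
lemma coeff_seriesCoeffAt (p : M) (F : PowerSeries (AddMonoidAlgebra ℤ M)) (j : ℕ) :
    coeff j (seriesCoeffAt p F) = (coeff j F).coeff p :=
  PowerSeries.coeff_mk j fun j => (coeff j F).coeff p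

lemma seriesCoeffAt_X_pow_mul (p : M) (n : ℕ) (F : PowerSeries (AddMonoidAlgebra ℤ M)) :
    seriesCoeffAt p (X ^ n * F) = X ^ n * seriesCoeffAt p F := by
  ext j
  simp only [coeff_seriesCoeffAt, coeff_X_pow_mul']
  split_ifs <;> simp

lemma seriesCoeffAt_mul_C_single (p τ : M) (F : PowerSeries (AddMonoidAlgebra ℤ M)) :
    seriesCoeffAt p (F * C (single τ 1)) = seriesCoeffAt (p - τ) F := by
  ext j
  simp [coeff_mul_C, sub_eq_add_neg]

lemma seriesCoeffAt_partitionSeries (a : ι → M) (ν : M) :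
    seriesCoeffAt (-ν) (partitionSeries a) = PPart a ν := by
  ext j
  simp [partitionSeries, PPart, coeff_sum, coeff_single, Finsupp.single_apply, sum_boole]

lemma prod_one_sub_X_mul_C_single (u : Finset M) :
    ∏ α ∈ u, (1 - X * C (single (-α) (1 : ℤ))) =
      ∑ T ∈ u.powerset, (-1 : ℤ) ^ T.card • (X ^ T.card * C (single (-∑ α ∈ T, α) 1)) := by
  simp_rw [sub_eq_add_neg, prod_one_add]
  refine sum_congr rfl fun T _ => ?_
  rw [prod_neg, prod_mul_distrib, prod_const, ← map_prod, prod_single, prod_const_one,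
    sum_neg_distrib, zsmul_eq_mul]
  push_cast
  ring

lemma partitionSeries_coe_mul_prod (s : Finset M) :
    partitionSeries (fun α : s => (α : M)) * ∏ α ∈ s, (1 - X * C (single (-α) (1 : ℤ))) = 1 := by
  rw [← prod_coe_sort]
  exact partitionSeries_mul_prod _

lemma partitionSeries_coe_eq_mul_prod_sdiff {s t : Finset M} (hst : s ⊆ t) :
    partitionSeries (fun α : s => (α : M)) =
      partitionSeries (fun α : t => (α : M)) * ∏ α ∈ t \ s, (1 - X * C (single (-α) (1 : ℤ))) := by
  calc partitionSeries (fun α : s => (α : M))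
      = partitionSeries (fun α : s => (α : M)) *
          (partitionSeries (fun α : t => (α : M)) * ∏ α ∈ t, (1 - X * C (single (-α) 1))) := by
        rw [partitionSeries_coe_mul_prod, mul_one]
    _ = partitionSeries (fun α : t => (α : M)) * (∏ α ∈ t \ s, (1 - X * C (single (-α) 1))) *
          (partitionSeries (fun α : s => (α : M)) * ∏ α ∈ s, (1 - X * C (single (-α) 1))) := by
        rw [← prod_sdiff hst]; ring
    _ = _ := by rw [partitionSeries_coe_mul_prod, mul_one]

theorem PPart_coe_eq_sum_powerset_sdiff {s t : Finset M} (hst : s ⊆ t) (ν : M) :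
    PPart (fun α : s => (α : M)) ν =
      ∑ T ∈ (t \ s).powerset, (-1 : ℤ) ^ T.card •
        (X ^ T.card * PPart (fun α : t => (α : M)) (ν - ∑ α ∈ T, α)) := by
  rw [← seriesCoeffAt_partitionSeries, partitionSeries_coe_eq_mul_prod_sdiff hst,
    prod_one_sub_X_mul_C_single, mul_sum, map_sum]
  refine sum_congr rfl fun T _ => ?_
  rw [mul_smul_comm, map_zsmul, mul_left_comm, seriesCoeffAt_X_pow_mul, seriesCoeffAt_mul_C_single,
    ← seriesCoeffAt_partitionSeries, neg_sub_neg, neg_sub]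

lemma finite_setOf_sum_nsmul_eq {a : ι → M} (φ : M →+ ℝ) (ha : ∀ i, 0 < φ (a i)) (ν : M) :
    {c : ι → ℕ | ∑ i, c i • a i = ν}.Finite := by
  refine (Set.finite_Iic fun i => ⌊φ ν / φ (a i)⌋₊).subset fun c (hc : _ = ν) i => ?_
  refine Nat.le_floor ((le_div_iff₀ (ha i)).2 ?_)
  calc (c i : ℝ) * φ (a i) = φ (c i • a i) := by rw [map_nsmul, nsmul_eq_mul]
    _ ≤ ∑ k, φ (c k • a k) :=
        single_le_sum (f := fun k => φ (c k • a k))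
          (fun k _ => by rw [map_nsmul, nsmul_eq_mul]; exact mul_nonneg (c k).cast_nonneg (ha k).le)
          (mem_univ i)
    _ = φ ν := by rw [← map_sum, hc]

lemma eventually_natCard_eq_sum_coeff_PPart {a : ι → M} (φ : M →+ ℝ) (ha : ∀ i, 0 < φ (a i))
    (ν : M) :
    ∀ᶠ N in atTop, (Nat.card {c : ι → ℕ // ∑ i, c i • a i = ν} : ℤ) =
      ∑ j ∈ range N, coeff j (PPart a ν) := by
  set s := (finite_setOf_sum_nsmul_eq φ ha ν).toFinset
  filter_upwards [(eventually_all_finset s).2 fun c _ => eventually_gt_atTop (∑ i, c i)]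
    with N hN
  rw [← Set.coe_ofPred, Nat.card_eq_card_finite_toFinset (finite_setOf_sum_nsmul_eq φ ha ν),
    card_eq_sum_card_fiberwise fun c hc => mem_range.2 (hN c hc)]
  push_cast
  refine sum_congr rfl fun j _ => ?_
  rw [PPart, PowerSeries.coeff_mk]
  congr 2
  ext c
  simp [s, mem_tuples, and_comm]

end PartitionFunction

namespace RootSystemData

variable (R : RootSystemData V)

lemma pol_pos_of_mem_pos {α : V} (h : α ∈ R.pos) : 0 < R.pol α := (mem_filter.1 h).2

lemma posS_subset_pos : R.posS ⊆ R.pos := inter_subset_left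

lemma pos_sdiff_posS : R.pos \ R.posS = R.posL := by
  ext α
  simp only [posS, posL, pos, short, long, Finset.mem_sdiff, mem_inter, mem_filter, not_and,
    not_forall, not_le, exists_prop]
  tauto

lemma PPart_posS_eq_sum_powerset_posL (ν : V) :
    PPart (fun α : R.posS => (α : V)) ν =
      ∑ T ∈ R.posL.powerset, (-1 : ℤ) ^ T.card •
        (X ^ T.card * PPart (fun α : R.pos => (α : V)) (ν - ∑ α ∈ T, α)) := by
  rw [PPart_coe_eq_sum_powerset_sdiff R.posS_subset_pos, pos_sdiff_posS]

variable [Fintype R.weyl]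

theorem mbar_eq_sum_powerset_posL (lam mu : V) :
    R.mbar lam mu =
      ∑ T ∈ R.posL.powerset, (-1 : ℤ) ^ T.card •
        (X ^ T.card * R.mfull lam (mu + ∑ α ∈ T, α)) := by
  simp only [mbar, mfull, genKF, PPart_posS_eq_sum_powerset_posL, smul_sum, mul_sum]
  rw [sum_comm]
  refine sum_congr rfl fun T _ => sum_congr rfl fun w _ => ?_
  rw [smul_comm, mul_smul_comm, sub_sub, add_right_comm]

lemma eventually_mult1_eq_sum_coeff_genKF {ι : Type} [Fintype ι] {a : ι → V}
    (ha : ∀ i, 0 < R.pol (a i)) (lam mu : V) :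
    ∀ᶠ N in atTop, R.mult1 a lam mu = ∑ j ∈ range N, coeff j (R.genKF a lam mu) := by
  filter_upwards [eventually_all.2 fun w : R.weyl =>
    eventually_natCard_eq_sum_coeff_PPart R.pol.toAddMonoidHom ha
      ((w : V ≃ₗ[ℝ] V) (lam + R.rho) - (mu + R.rho))] with N hN
  simp only [mult1, genKF, hN, map_sum, map_zsmul, smul_eq_mul, mul_sum]
  exact sum_comm

theorem mult1_posS_eq_sum_powerset_posL (lam : V) :
    R.mult1 (fun α : R.posS => (α : V)) lam 0 =
      ∑ T ∈ R.posL.powerset,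
        (-1 : ℤ) ^ T.card * R.mult1 (fun α : R.pos => (α : V)) lam (∑ α ∈ T, α) := by
  have hS := R.eventually_mult1_eq_sum_coeff_genKF
    (fun α : R.posS => R.pol_pos_of_mem_pos (R.posS_subset_pos α.2)) lam 0
  have hP : ∀ T ∈ R.posL.powerset, ∀ᶠ N in atTop,
      ∑ j ∈ range N, coeff j (X ^ T.card * R.mfull lam (0 + ∑ α ∈ T, α)) =
        R.mult1 (fun α : R.pos => (α : V)) lam (∑ α ∈ T, α) := fun T _ => by
    filter_upwards [(tendsto_sub_atTop_nat T.card).eventually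
      (R.eventually_mult1_eq_sum_coeff_genKF (fun α : R.pos => R.pol_pos_of_mem_pos α.2) lam _)]
      with N hN
    rw [sum_range_coeff_X_pow_mul, zero_add, hN, mfull]
  obtain ⟨N, hSN, hPN⟩ := (hS.and ((eventually_all_finset _).2 hP)).exists
  rw [hSN, ← mbar, mbar_eq_sum_powerset_posL]
  simp only [map_sum, map_zsmul, smul_eq_mul]
  rw [sum_comm]
  exact sum_congr rfl fun T hT => by rw [← mul_sum, hPN T hT]

lemma Fser_eq_C_mul_partitionSeries (lam : V) :
    Fser R lam = C (expo (-R.rho) * R.Jop (expo (lam + R.rho))) *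
        partitionSeries (fun α : R.posS => (α : V)) := by
  ext j : 1
  simp only [Fser, partitionSeries, coeff_mk, coeff_C_mul, Jop, expo, mapDomain_single, mul_sum,
    sum_mul, smul_mul_assoc, mul_smul_comm, single_mul_single, one_mul]
  rw [sum_comm]
  refine sum_congr rfl fun c _ => sum_congr rfl fun w _ => ?_
  congr 2
  abel

end RootSystemData

theorem statement19_general {V : Type} [NormedAddCommGroup V] [InnerProductSpace ℝ V]
    (R : RootSystemData V) [Fintype R.weyl]
    (lam : V) :
    (Fser R lam *
        ∏ α ∈ R.posS,
          (1 - PowerSeries.X *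
            PowerSeries.C (R := AddMonoidAlgebra ℤ V) (RootSystemData.expo (-α))) =
      PowerSeries.C (R := AddMonoidAlgebra ℤ V)
        (RootSystemData.expo (-R.rho) * R.Jop (RootSystemData.expo (lam + R.rho)))) ∧
    (∀ mu : V,
      R.mbar lam mu =
        ∑ S ∈ R.posL.powerset,
          ((-1 : ℤ) ^ S.card) •
            (PowerSeries.X ^ S.card * R.mfull lam (mu + ∑ α ∈ S, α))) ∧
    R.mult1 (fun α : R.posS => (α : V)) lam 0 =
      ∑ S ∈ R.posL.powerset,
        ((-1 : ℤ) ^ S.card) * R.mult1 (fun α : R.pos => (α : V)) lam (∑ α ∈ S, α) := by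
  refine ⟨?_, R.mbar_eq_sum_powerset_posL lam, R.mult1_posS_eq_sum_powerset_posL lam⟩
  rw [R.Fser_eq_C_mul_partitionSeries, mul_assoc]
  convert mul_one _ using 2
  exact partitionSeries_coe_mul_prod R.posS

/-- (1) The generating identity
`Σ_μ m̄^μ_λ(q) e^μ · ∏_{α∈Δ⁺_s}(1 − q e^{−α}) = e^{−ρ} J(e^{λ+ρ})`, i.e.
`Σ_μ m̄^μ_λ(q) e^μ = χ_λ ∏_{α>0}(1−e^{−α})/∏_{α∈Δ⁺_s}(1−qe^{−α})`.
(2) `m̄^μ_λ(q) = Σ_{A⊆Δ⁺_l} (−q)^{#A} m^{μ+|A|}_λ(q)`, relating short and Lusztig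
`q`-analogues.  (3) At `q = 1`, `μ = 0`:
`dim V_λ^H = Σ_{A⊆Δ⁺_l} (−1)^{#A} m_λ^{|A|}` (with `dim V_λ^H = m̄^0_λ(1)`). -/
theorem statement19 {V : Type} [NormedAddCommGroup V] [InnerProductSpace ℝ V]
    [FiniteDimensional ℝ V] (R : RootSystemData V) [Fintype R.weyl]
    (hirr : R.IsIrreducible) (h2 : R.TwoLengths)
    (lam : V) (hlam : R.Dominant lam) :
    (Fser R lam *
        ∏ α ∈ R.posS,
          (1 - PowerSeries.X *
            PowerSeries.C (R := AddMonoidAlgebra ℤ V) (RootSystemData.expo (-α))) =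
      PowerSeries.C (R := AddMonoidAlgebra ℤ V)
        (RootSystemData.expo (-R.rho) * R.Jop (RootSystemData.expo (lam + R.rho)))) ∧
    (∀ mu : V,
      R.mbar lam mu =
        ∑ S ∈ R.posL.powerset,
          ((-1 : ℤ) ^ S.card) •
            (PowerSeries.X ^ S.card * R.mfull lam (mu + ∑ α ∈ S, α))) ∧
    R.mult1 (fun α : R.posS => (α : V)) lam 0 =
      ∑ S ∈ R.posL.powerset,
        ((-1 : ℤ) ^ S.card) * R.mult1 (fun α : R.pos => (α : V)) lam (∑ α ∈ S, α) :=
  statement19_general R lam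
end
end
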